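/- Let G be a discrete group, N ⊴ G, and A a G-graded *-algebra. Let Y_{G/N} denote Mansfield's bimodule spanned by (a_r, s) (an A⋊G⋊N – A⋊(G/N) bimodule with the formulas of the paper), let Y_{G/G} denote the case N = G (an A⋊G⋊G – A bimodule), let Y_{G/G}⋊(G/N) be the crossed product bimodule with generators (a_r, s, tN) (using the coaction δ_Y(a_r,s) = (a_r,s)⊗s⁻¹, i.e. the grading on Y_{G/G} assigning (a_r,s) degree s⁻¹, restricted to G/N), and let X = X_N^G(A⋊G) be Green's bimodule for the dual action on A⋊G, spanned by (a_r, s, t) with the Green formulas. Define Φ on generators of the balanced tensor product (Y_{G/G}⋊(G/N)) ⊗ conj(Y_{G/N}) by Φ((a_r, s, tN) ⊗ conj(b_u, v)) = (a_r b_u*, u s, s⁻¹ v) if tN = vN and 0 otherwise. Then Φ preserves the left A⋊G⋊G⋊(G/N)-module action and the right A⋊G⋊N-valued inner product on generators; i.e., Φ(c·ξ) = c·Φ(ξ) and ⟨Φ(ξ), Φ(η)⟩ = ⟨ξ, η⟩ for generators ξ, η and generators c of A⋊G⋊G⋊(G/N). -/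
import Mathlib


/-!
Statement 11 (the key computation in Theorem 3.1 of Kaliszewski–Quigg): for a
discrete group `G`, `N ⊴ G`, and a `G`-graded *-algebra `A`, the map `Φ` defined
on generators of `(Y_{G/G}^G(A) ⋊ (G/N)) ⊗_{A ⋊ (G/N)} conj(Y_{G/N}^G(A))` by
`Φ((a_r, s, tN) ⊗ conj(b_u, v)) = (a_r b_u*, u s, s⁻¹ v)` if `tN = vN` (else `0`),
with values in Green's bimodule `X_N^G(A ⋊ G)`, preserves the left
`A ⋊ G ⋊ G ⋊ (G/N)`-module action and the right `A ⋊ G ⋊ N`-valued inner product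
on generators.

Generators of `Y_{G/G}^G(A) ⋊ (G/N)` are `(a_r, s, tN)`, modelled in
`(G × G × G ⧸ N) →₀ A`; generators of `Y_{G/N}^G(A)` are `(b_u, v)`, modelled in
`(G × G) →₀ A`; generators of `X_N^G(A ⋊ G)` are `((a_r, s), t)`, modelled in
`(G × G × G) →₀ A`.  All actions and inner products are given by the generator
formulas of the paper (see the individual definitions below).
-/

attribute [local instance] Classical.propDecidable

noncomputable section

variable {G : Type*} [Group G] {A : Type*} [Ring A] [Algebra ℂ A] [StarRing A]
  [StarModule ℂ A] {N : Subgroup G} [N.Normal]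

/-- `A` is a `G`-graded *-algebra with grading subspaces `𝒜 s`. -/
structure IsStarGrading (𝒜 : G → Submodule ℂ A) : Prop where
  one_mem : (1 : A) ∈ 𝒜 1
  mul_mem : ∀ ⦃s t : G⦄ ⦃a b : A⦄, a ∈ 𝒜 s → b ∈ 𝒜 t → a * b ∈ 𝒜 (s * t)
  star_mem : ∀ ⦃s : G⦄ ⦃a : A⦄, a ∈ 𝒜 s → star a ∈ 𝒜 s⁻¹
  indep : iSupIndep 𝒜
  span_top : ⨆ s, 𝒜 s = ⊤

/-- Left action of the generator `(a, r, s, t, uN)` of `A ⋊ G ⋊ G ⋊ (G/N)` on the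
generator `(b, r', s', vN)` of the crossed-product Mansfield bimodule
`Y_{G/G}^G(A) ⋊ (G/N)` (coaction `δ_Y (a_r, s) = (a_r, s) ⊗ s⁻¹`):
`= (a b, r r', s' t⁻¹, vN)` if `s t = r' s'` and `uN = s'⁻¹ vN`, else `0`. -/
def c4ActW (a : A) (r s t : G) (u : G ⧸ N) (b : A) (r' s' : G) (v : G ⧸ N) :
    (G × G × G ⧸ N) →₀ A :=
  if s * t = r' * s' ∧ u = ((s'⁻¹ : G) : G ⧸ N) * v then
    Finsupp.single (r * r', s' * t⁻¹, v) (a * b)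
  else 0

/-- Left action of the generator `(a, r, s, t, uN)` of `A ⋊ G ⋊ G ⋊ (G/N)` on the
generator `((b, r', s'), t')` of Green's bimodule `X_N^G(A ⋊ G)` (for the dual
action `δ̂` of `G` on `A ⋊ G`): `= ((a b, s' t⁻¹), t t')` if `s = r' s' t⁻¹` and
`uN = t'N`, else `0`. -/
def c4ActX (a : A) (r s t : G) (u : G ⧸ N) (b : A) (r' s' t' : G) :
    (G × G × G) →₀ A :=
  if s = r' * s' * t⁻¹ ∧ u = (t' : G ⧸ N) then
    Finsupp.single (r * r', s' * t⁻¹, t * t') (a * b)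
  else 0

/-- `Φ` on generators:
`Φ((a, r, s, tN) ⊗ conj(b, u, v)) = ((a b*, u s), s⁻¹ v)` if `tN = vN`, else `0`. -/
def PhiGen (a : A) (r s : G) (t : G ⧸ N) (b : A) (u v : G) : (G × G × G) →₀ A :=
  if t = (v : G ⧸ N) then
    Finsupp.single (r * u⁻¹, u * s, s⁻¹ * v) (a * star b)
  else 0

/-- `Φ` extended linearly in the first (crossed-product Mansfield) leg. -/
def PhiLift (w : (G × G × G ⧸ N) →₀ A) (b : A) (u v : G) : (G × G × G) →₀ A :=
  w.sum fun p x => PhiGen x p.1 p.2.1 p.2.2 b u v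

/-- The left action of a generator of `A ⋊ G ⋊ G ⋊ (G/N)`, extended linearly over
`X_N^G(A ⋊ G)`. -/
def c4ActXLift (a : A) (r s t : G) (u : G ⧸ N) (x : (G × G × G) →₀ A) :
    (G × G × G) →₀ A :=
  x.sum fun q y => c4ActX a r s t u y q.1 q.2.1 q.2.2

/-- The `A ⋊ G ⋊ N`-valued right inner product on Green's bimodule
`X_N^G(A ⋊ G)`, on generators:
`⟨((a,r,s),t), ((b,r',s'),t')⟩ = ((star a · b, s' t), t⁻¹ t')` if `r s = r' s'`
and `tN = t'N`, else `0`. -/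
def xInner (a : A) (r s t : G) (b : A) (r' s' t' : G) : (G × G × N) →₀ A :=
  if h : r * s = r' * s' ∧ (t : G ⧸ N) = (t' : G ⧸ N) then
    Finsupp.single (r⁻¹ * r', s' * t, ⟨t⁻¹ * t', QuotientGroup.eq.mp h.2⟩)
      (star a * b)
  else 0

/-- The Green right inner product, extended bilinearly. -/
def xInnerLift (x x' : (G × G × G) →₀ A) : (G × G × N) →₀ A :=
  x.sum fun p a => x'.sum fun q b => xInner a p.1 p.2.1 p.2.2 b q.1 q.2.1 q.2.2

/-- The `A ⋊ (G/N)`-valued right inner product on `Y_{G/G}^G(A) ⋊ (G/N)`, on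
generators: `⟨(b,r,s,vN),(b',r',s',v'N)⟩ = (star b · b', v'N)` if `r s = r' s'`
and `s⁻¹ vN = s'⁻¹ v'N`, else `0`. -/
def wInner (b : A) (r s : G) (v : G ⧸ N) (b' : A) (r' s' : G) (v' : G ⧸ N) :
    (G × G ⧸ N) →₀ A :=
  if r * s = r' * s' ∧ ((s⁻¹ : G) : G ⧸ N) * v = ((s'⁻¹ : G) : G ⧸ N) * v' then
    Finsupp.single (r⁻¹ * r', v') (star b * b')
  else 0

/-- Involution on the restricted crossed product `A ⋊ (G/N)`. -/
def rcpStar (f : (G × G ⧸ N) →₀ A) : (G × G ⧸ N) →₀ A :=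
  f.sum fun p a => Finsupp.single (p.1⁻¹, (p.1 : G ⧸ N) * p.2) (star a)

/-- The right action of an element of `A ⋊ (G/N)` on the generator `(a_r, s)` of
Mansfield's bimodule `Y_{G/N}^G(A)`: on algebra generators,
`(a_r, s)·(b_t, uN) = (a_r b_t, t⁻¹ s)` if `sN = t·uN`, else `0`. -/
def rActY (a : A) (r s : G) (ρ : (G × G ⧸ N) →₀ A) : (G × G) →₀ A :=
  ρ.sum fun q x =>
    if (s : G ⧸ N) = (q.1 : G ⧸ N) * q.2 then
      Finsupp.single (r * q.1, q.1⁻¹ * s) (a * x)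
    else 0

/-- The `A ⋊ G ⋊ N`-valued left inner product on Mansfield's bimodule
`Y_{G/N}^G(A)`, with first entry the generator `(a_r, s)`, extended linearly in
the second entry: on generators,
`⟨(a_r,s),(b_t,u)⟩ = (a_r b_t*, t s, s⁻¹ u)` if `sN = uN`, else `0`. -/
def mLeftInnerLift (a : A) (r s : G) (y : (G × G) →₀ A) : (G × G × N) →₀ A :=
  y.sum fun q b =>
    if h : (s : G ⧸ N) = (q.2 : G ⧸ N) then
      Finsupp.single (r * q.1⁻¹, q.1 * s, ⟨s⁻¹ * q.2, QuotientGroup.eq.mp h⟩)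
        (a * star b)
    else 0

lemma sum_ite_single {α M β : Type*} [Zero M] [AddCommMonoid β]
    (c : Prop) [Decidable c] (p : α) (a : M) (f : α → M → β) (h : f p 0 = 0) :
    (if c then Finsupp.single p a else 0).sum f = if c then f p a else 0 := by
  split_ifs with hc
  · exact Finsupp.sum_single_index h
  · exact Finsupp.sum_zero_index

/-- `Φ` preserves the left `A ⋊ G ⋊ G ⋊ (G/N)`-action and the right
`A ⋊ G ⋊ N`-valued inner product on generators; the inner product of tensors is
`⟨w ⊗ conj z, w' ⊗ conj z'⟩ = ⟨z, z' · (⟨w, w'⟩_{A ⋊ (G/N)})*⟩_L`. -/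
theorem Ng_triangle_bimodule_map
    (𝒜 : G → Submodule ℂ A) (h𝒜 : IsStarGrading 𝒜) :
    -- `Φ` intertwines the left actions:
    (∀ (a : A) (r s t : G) (u : G ⧸ N) (b' : A) (r' s' : G) (v : G ⧸ N)
        (bz : A) (uz vz : G), a ∈ 𝒜 r → b' ∈ 𝒜 r' → bz ∈ 𝒜 uz →
      PhiLift (N := N) (c4ActW a r s t u b' r' s' v) bz uz vz =
        c4ActXLift a r s t u (PhiGen b' r' s' v bz uz vz)) ∧
    -- `Φ` preserves the right inner products:
    (∀ (b₁ : A) (r₁ s₁ : G) (v₁ : G ⧸ N) (a₁ : A) (u₁ w₁ : G)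
        (b₂ : A) (r₂ s₂ : G) (v₂ : G ⧸ N) (a₂ : A) (u₂ w₂ : G),
      b₁ ∈ 𝒜 r₁ → a₁ ∈ 𝒜 u₁ → b₂ ∈ 𝒜 r₂ → a₂ ∈ 𝒜 u₂ →
      xInnerLift (PhiGen b₁ r₁ s₁ v₁ a₁ u₁ w₁) (PhiGen b₂ r₂ s₂ v₂ a₂ u₂ w₂) =
        mLeftInnerLift (N := N) a₁ u₁ w₁
          (rActY a₂ u₂ w₂ (rcpStar (wInner b₁ r₁ s₁ v₁ b₂ r₂ s₂ v₂)))) := by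
  constructor
  · intro a r s t u b' r' s' v bz uz vz _ _ _
    simp only [PhiLift, c4ActW, c4ActXLift, PhiGen, c4ActX]
    rw [sum_ite_single _ _ _ _ (by simp), sum_ite_single _ _ _ _ (by simp)]
    dsimp only
    by_cases hv : v = (vz : G ⧸ N)
    · have hiff : (s * t = r' * s' ∧ u = ((s'⁻¹ : G) : G ⧸ N) * v) ↔
          (s = r' * uz⁻¹ * (uz * s') * t⁻¹ ∧ u = ((s'⁻¹ * vz : G) : G ⧸ N)) := by
        subst hv
        constructor <;> rintro ⟨h1, h2⟩ <;> refine ⟨?_, ?_⟩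
        · have e : r' * uz⁻¹ * (uz * s') * t⁻¹ = r' * s' * t⁻¹ := by group
          rw [e, ← h1]; group
        · simp [h2, QuotientGroup.mk_mul]
        · rw [h1]; group
        · simp [h2, QuotientGroup.mk_mul]
      rw [if_pos hv, if_pos hv]
      by_cases h1 : s * t = r' * s' ∧ u = ((s'⁻¹ : G) : G ⧸ N) * v
      · rw [if_pos h1, if_pos (hiff.mp h1)]
        simp only [mul_assoc, mul_inv_rev, inv_inv]
      · rw [if_neg h1, if_neg (fun h => h1 (hiff.mpr h))]
    · simp [hv]
  · intro b₁ r₁ s₁ v₁ a₁ u₁ w₁ b₂ r₂ s₂ v₂ a₂ u₂ w₂ _ _ _ _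
    simp only [xInnerLift, PhiGen]
    rw [sum_ite_single _ _ _ _ (by simp [xInner]),
        sum_ite_single _ _ _ _ (by simp [xInner])]
    simp only [mLeftInnerLift, rActY, rcpStar, wInner]
    rw [sum_ite_single _ _ _ _ (by simp), sum_ite_single _ _ _ _ (by simp),
        ← ite_and, ← ite_and, sum_ite_single _ _ _ _ (by simp)]
    dsimp only
    simp only [xInner]
    by_cases hC : v₁ = ((w₁ : G) : G ⧸ N) ∧ v₂ = ((w₂ : G) : G ⧸ N) ∧
        r₁ * s₁ = r₂ * s₂ ∧ ((s₁⁻¹ * w₁ : G) : G ⧸ N) = ((s₂⁻¹ * w₂ : G) : G ⧸ N)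
    · obtain ⟨h1, h2, h3, h4⟩ := hC
      have hr : r₁⁻¹ * r₂ = s₁ * s₂⁻¹ := by
        rw [eq_mul_inv_of_mul_eq h3.symm]; group
      have hq1 : r₁ * u₁⁻¹ * (u₁ * s₁) = r₂ * u₂⁻¹ * (u₂ * s₂) := by
        have e1 : r₁ * u₁⁻¹ * (u₁ * s₁) = r₁ * s₁ := by group
        have e2 : r₂ * u₂⁻¹ * (u₂ * s₂) = r₂ * s₂ := by group
        rw [e1, e2, h3]
      have hp1 : ((s₁⁻¹ : G) : G ⧸ N) * v₁ = ((s₂⁻¹ : G) : G ⧸ N) * v₂ := by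
        rw [h1, h2, ← QuotientGroup.mk_mul, ← QuotientGroup.mk_mul, h4]
      have hp2 : ((w₂ : G) : G ⧸ N) =
          (((r₁⁻¹ * r₂)⁻¹ : G) : G ⧸ N) * ((((r₁⁻¹ * r₂) : G) : G ⧸ N) * v₂) := by
        rw [← mul_assoc, ← QuotientGroup.mk_mul, inv_mul_cancel,
          QuotientGroup.mk_one, one_mul, h2]
      have hp3 : ((w₁ : G) : G ⧸ N) = (((r₁⁻¹ * r₂)⁻¹⁻¹ * w₂ : G) : G ⧸ N) := by
        rw [inv_inv, hr, mul_assoc, QuotientGroup.mk_mul, ← h4,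
          ← QuotientGroup.mk_mul, mul_inv_cancel_left]
      rw [if_pos ⟨h1, h2⟩, dif_pos ⟨hq1, h4⟩, if_pos ⟨⟨h3, hp1⟩, hp2⟩, dif_pos hp3]
      simp only [hr]
      congr 1
      · simp [Prod.ext_iff, Subtype.ext_iff, mul_assoc, mul_inv_rev, inv_inv]
        rw [← mul_assoc, ← mul_assoc, hr]
      · simp [star_mul, star_star, mul_assoc]
    · trans (0 : (G × G × ↥N) →₀ A)
      · split_ifs with hA hB
        · exact absurd ⟨hA.1, hA.2,
            by simpa [mul_assoc, inv_mul_cancel_left] using hB.1, hB.2⟩ hC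
        · rfl
        · rfl
      · symm
        split_ifs with hA hB
        · exfalso
          obtain ⟨⟨h3, hp1⟩, hp2⟩ := hA
          have hr : r₁⁻¹ * r₂ = s₁ * s₂⁻¹ := by
            rw [eq_mul_inv_of_mul_eq h3.symm]; group
          have hc2 : v₂ = ((w₂ : G) : G ⧸ N) := by
            rw [hp2, ← mul_assoc, ← QuotientGroup.mk_mul, inv_mul_cancel,
              QuotientGroup.mk_one, one_mul]
          have hc1 : v₁ = ((w₁ : G) : G ⧸ N) := by
            rw [hB, inv_inv, hr, mul_assoc, QuotientGroup.mk_mul,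
              QuotientGroup.mk_mul, ← hc2, ← hp1, ← mul_assoc,
              ← QuotientGroup.mk_mul, mul_inv_cancel, QuotientGroup.mk_one, one_mul]
          have h4 : ((s₁⁻¹ * w₁ : G) : G ⧸ N) = ((s₂⁻¹ * w₂ : G) : G ⧸ N) := by
            rw [QuotientGroup.mk_mul, QuotientGroup.mk_mul, ← hc1, ← hc2]
            exact hp1
          exact hC ⟨hc1, hc2, h3, h4⟩
        · rfl
        · rfl

end
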